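/- For a commutative monoid (M, +) and functions initialized by h^0(e_q) = m_0 and h^0(e) = 0 for e ≠ e_q, define h^ℓ(e_o) = Σ_{(e_s,r,e_o) ∈ Ê^ℓ_{e_q}} φ^ℓ(h^{ℓ−1}(e_s), r) where Ê^ℓ_{e_q} is the set of edges whose source is reachable from e_q in exactly ℓ−1 steps, extended by h^ℓ(e) = 0 for unreachable e. Then h^ℓ coincides with the recursion ĥ^ℓ(e_o) = Σ_{(e_s,r,e_o) ∈ F} φ^ℓ(ĥ^{ℓ−1}(e_s), r), provided φ^ℓ(0, r) = 0 for all r and ℓ. -/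

import Mathlib

/-- `IsWalk F a b es` : `es` is a list of labeled edges of `F`, connected
head-to-tail, starting at `a` and ending at `b`. -/
def IsWalk {V R : Type*} (F : Set (V × R × V)) : V → V → List (V × R × V) → Prop
  | a, b, [] => a = b
  | a, b, e :: es => e ∈ F ∧ e.1 = a ∧ IsWalk F e.2.2 b es

/-- The ℓ-th layer edge set of the r-digraph `G_{e_q,e_a|L}` : edges occurring
in position ℓ (1-based) of some length-`L` walk from `eq` to `ea`. -/
def LayerEdges {V R : Type*} (F : Set (V × R × V)) (eq ea : V) (L ℓ : ℕ) :
    Set (V × R × V) :=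
  {e | ∃ es : List (V × R × V), IsWalk F eq ea es ∧ es.length = L ∧ es[ℓ - 1]? = some e}

/-- `Ê^ℓ_{e_q}` : edges visible in ℓ steps from `eq`, i.e. edges of `F` whose
source is reachable from `eq` by a walk of length ℓ-1. -/
def VisEdges {V R : Type*} (F : Set (V × R × V)) (eq : V) (ℓ : ℕ) : Set (V × R × V) :=
  {e | e ∈ F ∧ ∃ es : List (V × R × V), IsWalk F eq e.1 es ∧ es.length = ℓ - 1}

/-- Every vertex has an identity self-loop. -/
def HasSelfLoops {V R : Type*} (F : Set (V × R × V)) : Prop :=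
  ∃ idr : R, ∀ v : V, (v, idr, v) ∈ F

open scoped Classical

/-- Full monoid-valued message passing: layer-wise sum over all in-edges. -/
noncomputable def hFull {V R M : Type*} [AddCommMonoid M] (F : Finset (V × R × V))
    (φ : ℕ → M → R → M) (eq : V) (m0 : M) : ℕ → V → M
  | 0, e => if e = eq then m0 else 0
  | ℓ + 1, eo =>
      ∑ e ∈ F.filter (fun e => e.2.2 = eo), φ (ℓ + 1) (hFull F φ eq m0 ℓ e.1) e.2.1

/-- Restricted monoid-valued message passing: sum only over edges of `Ê^{ℓ+1}_{e_q}`,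
i.e. edges whose source is reachable from `eq` in exactly ℓ steps. -/
noncomputable def hRes {V R M : Type*} [AddCommMonoid M] (F : Finset (V × R × V))
    (φ : ℕ → M → R → M) (eq : V) (m0 : M) : ℕ → V → M
  | 0, e => if e = eq then m0 else 0
  | ℓ + 1, eo =>
      ∑ e ∈ F.filter (fun e => e.2.2 = eo ∧
          ∃ es : List (V × R × V), IsWalk (↑F) eq e.1 es ∧ es.length = ℓ),
        φ (ℓ + 1) (hRes F φ eq m0 ℓ e.1) e.2.1

lemma isWalk_append {V R : Type*} (F : Set (V × R × V)) :
    ∀ (es : List (V × R × V)) (a b : V) (e : V × R × V),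
      IsWalk F a b es → e ∈ F → e.1 = b → IsWalk F a e.2.2 (es ++ [e])
  | [], a, b, e, hw, he, h1 => by
      cases hw
      exact ⟨he, h1, rfl⟩
  | f :: es, a, b, e, hw, he, h1 => by
    obtain ⟨hf, hf1, hw'⟩ := hw
    exact ⟨hf, hf1, isWalk_append F es _ b e hw' he h1⟩

lemma hFull_ne_zero_walk {V R M : Type*} [AddCommMonoid M] (F : Finset (V × R × V))
    (φ : ℕ → M → R → M) (hφ : ∀ ℓ r, φ ℓ 0 r = 0) (eq : V) (m0 : M) :
    ∀ (ℓ : ℕ) (v : V), hFull F φ eq m0 ℓ v ≠ 0 →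
      ∃ es : List (V × R × V), IsWalk (↑F) eq v es ∧ es.length = ℓ := by
  intro ℓ
  induction ℓ with
  | zero =>
    intro v hv
    simp only [hFull] at hv
    by_cases h : v = eq
    · exact ⟨[], h.symm, rfl⟩
    · simp [h] at hv
  | succ ℓ ih =>
    intro v hv
    simp only [hFull] at hv
    obtain ⟨e, he, hne⟩ := Finset.exists_ne_zero_of_sum_ne_zero hv
    simp only [Finset.mem_filter] at he
    have hs : hFull F φ eq m0 ℓ e.1 ≠ 0 := by
      intro h0; rw [h0, hφ] at hne; exact hne rfl
    obtain ⟨es, hw, hlen⟩ := ih e.1 hs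
    refine ⟨es ++ [e], ?_, by simp [hlen]⟩
    have := isWalk_append (↑F) es eq e.1 e hw he.1 rfl
    rwa [he.2] at this

theorem stmt8 {V R M : Type*} [AddCommMonoid M] (F : Finset (V × R × V))
    (hF : HasSelfLoops (↑F : Set (V × R × V)))
    (φ : ℕ → M → R → M) (hφ : ∀ ℓ r, φ ℓ 0 r = 0) (eq : V) (m0 : M) :
    ∀ (ℓ : ℕ) (e : V), hRes F φ eq m0 ℓ e = hFull F φ eq m0 ℓ e := by
  intro ℓ
  induction ℓ with
  | zero => intro e; rfl
  | succ ℓ ih =>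
    intro eo
    simp only [hRes, hFull]
    rw [Finset.sum_congr rfl (fun e _ => by rw [ih e.1])]
    refine Finset.sum_subset ?_ ?_
    · intro e he
      simp only [Finset.mem_filter] at he ⊢
      exact ⟨he.1, he.2.1⟩
    · intro e he hne
      simp only [Finset.mem_filter] at he hne
      push_neg at hne
      have : hFull F φ eq m0 ℓ e.1 = 0 := by
        by_contra h
        obtain ⟨es, hw, hlen⟩ := hFull_ne_zero_walk F φ hφ eq m0 ℓ e.1 h
        have := hne he.1 he.2
        exact this es hw hlen
      rw [this, hφ]
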